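/- arXiv:2009.12948 — 3 statements merged into one kernel-verified Lean document; each statement's English description precedes it below -/
import Mathlib

section
/- Let A = {A₁,...,A_m} ⊂ ℝ^{n×n}, let M be a DFA with transition structure matrices F₁,...,F_m ∈ ℝ^{ℓ×ℓ}, and let Φ_i = F_i ⊗ A_i. Then the constrained joint spectral radius ρ(A, M) = limsup_{k→∞} (max over M-accepted words σ of length k of ‖A_σ‖)^{1/k} equals the joint spectral radius ρ({Φ₁,...,Φ_m}) = limsup_{k→∞} (max over all words σ of length k of ‖Φ_σ‖)^{1/k}, where A_σ = A_{σ_k}⋯A_{σ₁} and Φ_σ = Φ_{σ_k}⋯Φ_{σ₁}, assuming L(M) contains words of every length. -/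
open Kronecker
open Filter

/-! ### Auxiliary material -/

/-- Type synonym used to carry an alternative norm. -/
def NormSyn (E : Type*) (_b : Bool) : Type _ := E

theorem exists_norm_le_norm {E : Type*} [AddCommGroup E] [Module ℝ E] [FiniteDimensional ℝ E]
    (p q : E → ℝ)
    (hpz : ∀ x, p x = 0 ↔ x = 0)
    (hpa : ∀ x y, p (x + y) ≤ p x + p y)
    (hps : ∀ (c : ℝ) x, p (c • x) = |c| * p x)
    (hqz : ∀ x, q x = 0 ↔ x = 0)
    (hqa : ∀ x y, q (x + y) ≤ q x + q y)
    (hqs : ∀ (c : ℝ) x, q (c • x) = |c| * q x) :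
    ∃ C : ℝ, 0 < C ∧ ∀ x, p x ≤ C * q x := by
  letI : AddCommGroup (NormSyn E false) := inferInstanceAs (AddCommGroup E)
  letI : AddCommGroup (NormSyn E true) := inferInstanceAs (AddCommGroup E)
  letI : Module ℝ (NormSyn E false) := inferInstanceAs (Module ℝ E)
  letI : Module ℝ (NormSyn E true) := inferInstanceAs (Module ℝ E)
  letI : FiniteDimensional ℝ (NormSyn E false) := inferInstanceAs (FiniteDimensional ℝ E)
  have pneg : ∀ x : E, p (-x) = p x := by
    intro x; have := hps (-1) x; simpa using this
  have qneg : ∀ x : E, q (-x) = q x := by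
    intro x; have := hqs (-1) x; simpa using this
  letI nq : NormedAddCommGroup (NormSyn E false) :=
    AddGroupNorm.toNormedAddCommGroup
      { toFun := fun x => q (x : E)
        map_zero' := (hqz 0).mpr rfl
        add_le' := hqa
        neg' := qneg
        eq_zero_of_map_eq_zero' := fun x hx => (hqz x).mp hx }
  letI np : NormedAddCommGroup (NormSyn E true) :=
    AddGroupNorm.toNormedAddCommGroup
      { toFun := fun x => p (x : E)
        map_zero' := (hpz 0).mpr rfl
        add_le' := hpa
        neg' := pneg
        eq_zero_of_map_eq_zero' := fun x hx => (hpz x).mp hx }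
  letI : NormedSpace ℝ (NormSyn E false) :=
    { norm_smul_le := fun c x => le_of_eq (by
        show q (c • x) = ‖c‖ * q x
        rw [Real.norm_eq_abs]; exact hqs c x) }
  letI : NormedSpace ℝ (NormSyn E true) :=
    { norm_smul_le := fun c x => le_of_eq (by
        show p (c • x) = ‖c‖ * p x
        rw [Real.norm_eq_abs]; exact hps c x) }
  let f : NormSyn E false →ₗ[ℝ] NormSyn E true :=
    { toFun := fun x => x
      map_add' := fun _ _ => rfl
      map_smul' := fun _ _ => rfl }
  have hf : Continuous f := f.continuous_of_finiteDimensional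
  obtain ⟨M, hM, hMle⟩ :=
    (ContinuousLinearMap.mk f hf : NormSyn E false →L[ℝ] NormSyn E true).isBoundedLinearMap.bound
  exact ⟨M, hM, fun x => hMle x⟩

section Struct

variable {ℓ m n : ℕ}

/-- 0-1 matrices with at most one nonzero entry per column. -/
def Is01Col (G : Matrix (Fin ℓ) (Fin ℓ) ℝ) : Prop :=
  (∀ s t, G s t = 0 ∨ G s t = 1) ∧ (∀ t s s', G s t ≠ 0 → G s' t ≠ 0 → s = s')

theorem Is01Col.one : Is01Col (1 : Matrix (Fin ℓ) (Fin ℓ) ℝ) := by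
  constructor
  · intro s t
    by_cases h : s = t
    · subst h; right; simp [Matrix.one_apply]
    · left; simp [Matrix.one_apply, h]
  · intro t s s' hs hs'
    by_cases h : s = t
    · by_cases h' : s' = t
      · exact h.trans h'.symm
      · exact absurd (Matrix.one_apply_ne h') hs'
    · exact absurd (Matrix.one_apply_ne h) hs

theorem Is01Col.mul {G H : Matrix (Fin ℓ) (Fin ℓ) ℝ} (hG : Is01Col G) (hH : Is01Col H) :
    Is01Col (G * H) := by
  have key : ∀ s t, (G * H) s t = ∑ r, G s r * H r t := fun s t => Matrix.mul_apply
  constructor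
  · intro s t
    by_cases hcol : ∀ r, H r t = 0
    · left
      rw [key]
      exact Finset.sum_eq_zero fun r _ => by rw [hcol r, mul_zero]
    · push_neg at hcol
      obtain ⟨r0, hr0⟩ := hcol
      have hH1 : H r0 t = 1 := (hH.1 r0 t).resolve_left hr0
      have hsum : (G * H) s t = G s r0 := by
        rw [key]
        rw [Finset.sum_eq_single r0]
        · rw [hH1, mul_one]
        · intro r _ hr
          have : H r t = 0 := by
            by_contra hne
            exact hr (hH.2 t r r0 hne hr0)
          rw [this, mul_zero]
        · intro h; exact absurd (Finset.mem_univ r0) h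
      rw [hsum]; exact hG.1 s r0
  · intro t s s' hs hs'
    by_cases hcol : ∀ r, H r t = 0
    · exfalso
      apply hs
      rw [key]
      exact Finset.sum_eq_zero fun r _ => by rw [hcol r, mul_zero]
    · push_neg at hcol
      obtain ⟨r0, hr0⟩ := hcol
      have hH1 : H r0 t = 1 := (hH.1 r0 t).resolve_left hr0
      have hsum : ∀ u, (G * H) u t = G u r0 := by
        intro u
        rw [key]
        rw [Finset.sum_eq_single r0]
        · rw [hH1, mul_one]
        · intro r _ hr
          have : H r t = 0 := by
            by_contra hne
            exact hr (hH.2 t r r0 hne hr0)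
          rw [this, mul_zero]
        · intro h; exact absurd (Finset.mem_univ r0) h
      rw [hsum s] at hs
      rw [hsum s'] at hs'
      exact hG.2 r0 s s' hs hs'

theorem Is01Col.listProd (l : List (Matrix (Fin ℓ) (Fin ℓ) ℝ))
    (h : ∀ G ∈ l, Is01Col G) : Is01Col l.prod := by
  induction l with
  | nil => simpa using Is01Col.one
  | cons a l ih =>
      rw [List.prod_cons]
      exact (h a List.mem_cons_self).mul (ih fun G hG => h G (List.mem_cons_of_mem a hG))

theorem kron_listProd
    (F : Fin m → Matrix (Fin ℓ) (Fin ℓ) ℝ)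
    (A : Fin m → Matrix (Fin n) (Fin n) ℝ)
    (Φ : Fin m → Matrix (Fin ℓ × Fin n) (Fin ℓ × Fin n) ℝ)
    (hΦ : ∀ i, Φ i = F i ⊗ₖ A i)
    (l : List (Fin m)) :
    (l.map Φ).prod = (l.map F).prod ⊗ₖ (l.map A).prod := by
  induction l with
  | nil => simp [Matrix.one_kronecker_one]
  | cons a l ih =>
      simp only [List.map_cons, List.prod_cons, ih, hΦ a, Matrix.mul_kronecker_mul]

theorem ofFn_reverse_map {α β : Type*} {k : ℕ} (σ : Fin k → α) (g : α → β) :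
    (List.ofFn fun i => g (σ i)).reverse = ((List.ofFn σ).reverse).map g := by
  rw [List.map_reverse, List.map_ofFn]
  rfl

end Struct

section EntryNorm

variable {ι κ : Type*} [Fintype ι] [Fintype κ]

/-- Entrywise sup norm of a matrix, via the Pi norm. -/
noncomputable def entryNorm (X : Matrix ι κ ℝ) : ℝ :=
  ‖(fun i j => X i j : ι → κ → ℝ)‖

theorem entryNorm_nonneg (X : Matrix ι κ ℝ) : 0 ≤ entryNorm X := norm_nonneg _

theorem entryNorm_zero_iff (X : Matrix ι κ ℝ) : entryNorm X = 0 ↔ X = 0 := by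
  constructor
  · intro h
    have := norm_eq_zero.mp h
    ext i j
    exact congrFun (congrFun this i) j
  · rintro rfl
    exact norm_eq_zero.mpr rfl

theorem entryNorm_add (X Y : Matrix ι κ ℝ) :
    entryNorm (X + Y) ≤ entryNorm X + entryNorm Y :=
  norm_add_le (fun i j => X i j : ι → κ → ℝ) (fun i j => Y i j)

theorem entryNorm_smul (c : ℝ) (X : Matrix ι κ ℝ) :
    entryNorm (c • X) = |c| * entryNorm X := by
  have := norm_smul c (fun i j => X i j : ι → κ → ℝ)
  unfold entryNorm; rw [← Real.norm_eq_abs, ← this]; rfl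

theorem abs_entry_le_entryNorm (X : Matrix ι κ ℝ) (i : ι) (j : κ) :
    |X i j| ≤ entryNorm X := by
  have h1 : ‖(fun j => X i j : κ → ℝ)‖ ≤ entryNorm X :=
    norm_le_pi_norm (fun i j => X i j : ι → κ → ℝ) i
  have h2 : |X i j| ≤ ‖(fun j => X i j : κ → ℝ)‖ := by
    simpa [Real.norm_eq_abs] using norm_le_pi_norm (fun j => X i j : κ → ℝ) j
  exact h2.trans h1

theorem entryNorm_le {X : Matrix ι κ ℝ} {c : ℝ} (hc : 0 ≤ c)
    (h : ∀ i j, |X i j| ≤ c) : entryNorm X ≤ c := by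
  rw [entryNorm, pi_norm_le_iff_of_nonneg hc]
  intro i
  rw [pi_norm_le_iff_of_nonneg hc]
  intro j
  simpa [Real.norm_eq_abs] using h i j

end EntryNorm

theorem entryNorm_kronecker {ℓ n : ℕ} (G : Matrix (Fin ℓ) (Fin ℓ) ℝ)
    (A : Matrix (Fin n) (Fin n) ℝ)
    (hG01 : ∀ s t, G s t = 0 ∨ G s t = 1) (hG : G ≠ 0) :
    entryNorm (G ⊗ₖ A) = entryNorm A := by
  apply le_antisymm
  · apply entryNorm_le (entryNorm_nonneg A)
    rintro ⟨s, i⟩ ⟨t, j⟩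
    have : (G ⊗ₖ A) (s, i) (t, j) = G s t * A i j := rfl
    rw [this, abs_mul]
    rcases hG01 s t with h | h
    · rw [h]; simpa using entryNorm_nonneg A
    · rw [h]; simpa using abs_entry_le_entryNorm A i j
  · obtain ⟨s, t, hst⟩ : ∃ s t, G s t ≠ 0 := by
      by_contra h
      push_neg at h
      exact hG (by ext s t; exact h s t)
    have h1 : G s t = 1 := (hG01 s t).resolve_left hst
    apply entryNorm_le (entryNorm_nonneg _)
    intro i j
    have : A i j = (G ⊗ₖ A) (s, i) (t, j) := by
      show A i j = G s t * A i j
      rw [h1, one_mul]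
    rw [this]
    exact abs_entry_le_entryNorm _ _ _

theorem norm_listProd_le {R : Type*} [Monoid R] (N : R → ℝ) (hnn : ∀ x, 0 ≤ N x)
    (hmul : ∀ x y, N (x * y) ≤ N x * N y) (B : ℝ) :
    ∀ l : List R, l ≠ [] → (∀ x ∈ l, N x ≤ B) → N l.prod ≤ B ^ l.length := by
  intro l
  induction l with
  | nil => intro h; exact absurd rfl h
  | cons a l ih =>
      intro _ hmem
      cases l with
      | nil => simpa using hmem a (by simp)
      | cons b l' =>
          rw [List.prod_cons]
          calc N (a * (b :: l').prod) ≤ N a * N (b :: l').prod := hmul _ _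
            _ ≤ B * B ^ (b :: l').length := by
                apply mul_le_mul (hmem a (by simp))
                  (ih (by simp) fun x hx => hmem x (List.mem_cons_of_mem a hx))
                  (hnn _) ((hnn a).trans (hmem a (by simp)))
            _ = B ^ (a :: b :: l').length := by
                simp [pow_succ, mul_comm]

theorem limsup_le_limsup_of_rpow_factor (u v : ℕ → ℝ) (C : ℝ) (hC : 0 < C)
    (hu0 : ∀ k, 0 ≤ u k)
    (hv0 : ∀ k, 0 ≤ v k)
    (hvb : IsBoundedUnder (· ≤ ·) atTop v)
    (hub : IsBoundedUnder (· ≤ ·) atTop u)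
    (h : ∀ k : ℕ, 1 ≤ k → u k ≤ C ^ ((1 : ℝ) / k) * v k) :
    limsup u atTop ≤ limsup v atTop := by
  have hL0 : (0 : ℝ) ≤ limsup v atTop :=
    le_limsup_of_frequently_le (Frequently.of_forall hv0) hvb
  have htend : Tendsto (fun k : ℕ => C ^ ((1 : ℝ) / k)) atTop (nhds 1) := by
    have h1 : Tendsto (fun k : ℕ => (1 : ℝ) / k) atTop (nhds 0) :=
      tendsto_one_div_atTop_nhds_zero_nat
    have h2 : ContinuousAt (fun y : ℝ => C ^ y) 0 := Real.continuousAt_const_rpow hC.ne'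
    have := h2.tendsto.comp h1
    simpa [Real.rpow_zero, Function.comp_def] using this
  by_contra hlt
  push_neg at hlt
  set L := limsup v atTop with hLdef
  set c : ℝ := (L + limsup u atTop) / 2 with hcdef
  have hLc : L < c := by rw [hcdef]; linarith
  have hcU : c < limsup u atTop := by rw [hcdef]; linarith
  set a : ℝ := (L + c) / 2 with hadef
  have hLa : L < a := by rw [hadef]; linarith
  have hac : a < c := by rw [hadef]; linarith
  have ha0 : 0 < a := lt_of_le_of_lt hL0 hLa
  have hev1 : ∀ᶠ k in atTop, v k < a := eventually_lt_of_limsup_lt hLa hvb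
  have hev2 : ∀ᶠ k in atTop, C ^ ((1 : ℝ) / (k : ℕ)) < c / a :=
    htend.eventually_lt_const (by rw [lt_div_iff₀ ha0]; linarith)
  have hev3 : ∀ᶠ k in atTop, 1 ≤ k := eventually_ge_atTop 1
  have hev : ∀ᶠ k in atTop, u k ≤ c := by
    filter_upwards [hev1, hev2, hev3] with k h1 h2 h3
    calc u k ≤ C ^ ((1 : ℝ) / k) * v k := h k h3
      _ ≤ (c / a) * a := by
          apply mul_le_mul h2.le h1.le (hv0 k)
          exact div_nonneg (by linarith) ha0.le
      _ = c := div_mul_cancel₀ c ha0.ne'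
  have : limsup u atTop ≤ c := limsup_le_of_le (isCoboundedUnder_le_of_le atTop hu0) hev
  exact absurd this (not_le.mpr hcU)



/-- The constrained joint spectral radius of `S(A, M)` equals the joint
spectral radius of the lifted system `S(A_M)` with `Φ i = F i ⊗ A i`, where
the `F i` are transition structure matrices of the DFA `M` (0-1 matrices with
at most one `1` per column), a word `σ₁ ⋯ σ_k` is `M`-accepted iff
`F (σ k) ⋯ F (σ 1) ≠ 0`, the norms are arbitrary sub-multiplicative matrix
norms, and `L(M)` contains words of every length. -/
theorem cjsr_eq_jsr_of_lift
    (n ℓ m : ℕ)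
    (A : Fin m → Matrix (Fin n) (Fin n) ℝ)
    (F : Fin m → Matrix (Fin ℓ) (Fin ℓ) ℝ)
    (hF01 : ∀ j s t, F j s t = 0 ∨ F j s t = 1)
    (hFcol : ∀ j t s s', F j s t ≠ 0 → F j s' t ≠ 0 → s = s')
    (Φ : Fin m → Matrix (Fin ℓ × Fin n) (Fin ℓ × Fin n) ℝ)
    (hΦ : ∀ i, Φ i = F i ⊗ₖ A i)
    (N1 : Matrix (Fin n) (Fin n) ℝ → ℝ)
    (N2 : Matrix (Fin ℓ × Fin n) (Fin ℓ × Fin n) ℝ → ℝ)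
    (hN1nonneg : ∀ X, 0 ≤ N1 X)
    (hN1zero : ∀ X, N1 X = 0 ↔ X = 0)
    (hN1add : ∀ X Y, N1 (X + Y) ≤ N1 X + N1 Y)
    (hN1smul : ∀ (c : ℝ) X, N1 (c • X) = |c| * N1 X)
    (hN1mul : ∀ X Y, N1 (X * Y) ≤ N1 X * N1 Y)
    (hN2nonneg : ∀ X, 0 ≤ N2 X)
    (hN2zero : ∀ X, N2 X = 0 ↔ X = 0)
    (hN2add : ∀ X Y, N2 (X + Y) ≤ N2 X + N2 Y)
    (hN2smul : ∀ (c : ℝ) X, N2 (c • X) = |c| * N2 X)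
    (hN2mul : ∀ X Y, N2 (X * Y) ≤ N2 X * N2 Y)
    (hExists : ∀ k : ℕ, ∃ σ : Fin k → Fin m,
      ((List.ofFn fun i => F (σ i)).reverse).prod ≠ 0) :
    Filter.limsup
      (fun k : ℕ =>
        (sSup {x : ℝ | ∃ σ : Fin k → Fin m,
            ((List.ofFn fun i => F (σ i)).reverse).prod ≠ 0 ∧
            x = N1 ((List.ofFn fun i => A (σ i)).reverse).prod}) ^ ((1 : ℝ) / k))
      Filter.atTop =
    Filter.limsup
      (fun k : ℕ =>
        (sSup {x : ℝ | ∃ σ : Fin k → Fin m,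
            x = N2 ((List.ofFn fun i => Φ (σ i)).reverse).prod}) ^ ((1 : ℝ) / k))
      Filter.atTop := by
  classical
  -- abbreviations for the products
  set Fprod : ∀ k : ℕ, (Fin k → Fin m) → Matrix (Fin ℓ) (Fin ℓ) ℝ :=
    fun k σ => ((List.ofFn fun i => F (σ i)).reverse).prod with hFprod
  set Aprod : ∀ k : ℕ, (Fin k → Fin m) → Matrix (Fin n) (Fin n) ℝ :=
    fun k σ => ((List.ofFn fun i => A (σ i)).reverse).prod with hAprod
  set Pprod : ∀ k : ℕ, (Fin k → Fin m) → Matrix (Fin ℓ × Fin n) (Fin ℓ × Fin n) ℝ :=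
    fun k σ => ((List.ofFn fun i => Φ (σ i)).reverse).prod with hPprod
  -- structural facts
  have hF01p : ∀ (k : ℕ) (σ : Fin k → Fin m), Is01Col (Fprod k σ) := by
    intro k σ
    rw [hFprod]
    simp only
    rw [ofFn_reverse_map σ F]
    apply Is01Col.listProd
    intro G hG
    obtain ⟨j, _, rfl⟩ := List.mem_map.mp hG
    exact ⟨hF01 j, hFcol j⟩
  have hkron : ∀ (k : ℕ) (σ : Fin k → Fin m), Pprod k σ = Fprod k σ ⊗ₖ Aprod k σ := by
    intro k σ
    rw [hFprod, hAprod, hPprod]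
    simp only
    rw [ofFn_reverse_map σ F, ofFn_reverse_map σ A, ofFn_reverse_map σ Φ]
    exact kron_listProd F A Φ hΦ _
  -- the two sets
  set S1 : ℕ → Set ℝ := fun k => {x : ℝ | ∃ σ : Fin k → Fin m,
      Fprod k σ ≠ 0 ∧ x = N1 (Aprod k σ)} with hS1
  set S2 : ℕ → Set ℝ := fun k => {x : ℝ | ∃ σ : Fin k → Fin m,
      x = N2 (Pprod k σ)} with hS2
  have hS1fin : ∀ k, (S1 k).Finite := fun k =>
    Set.Finite.subset (Set.finite_range fun σ : Fin k → Fin m => N1 (Aprod k σ))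
      (by rintro x ⟨σ, _, rfl⟩; exact ⟨σ, rfl⟩)
  have hS2fin : ∀ k, (S2 k).Finite := fun k =>
    Set.Finite.subset (Set.finite_range fun σ : Fin k → Fin m => N2 (Pprod k σ))
      (by rintro x ⟨σ, rfl⟩; exact ⟨σ, rfl⟩)
  have hS1ne : ∀ k, (S1 k).Nonempty := fun k => by
    obtain ⟨σ, hσ⟩ := hExists k
    exact ⟨N1 (Aprod k σ), σ, hσ, rfl⟩
  have hS2ne : ∀ k, (S2 k).Nonempty := fun k => by
    obtain ⟨σ, _⟩ := hExists k
    exact ⟨N2 (Pprod k σ), σ, rfl⟩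
  -- nonnegativity of the sups
  have hs1nn : ∀ k, 0 ≤ sSup (S1 k) := by
    intro k
    obtain ⟨x, hx⟩ := hS1ne k
    have hx' : 0 ≤ x := by obtain ⟨σ, _, rfl⟩ := hx; exact hN1nonneg _
    exact hx'.trans (le_csSup (hS1fin k).bddAbove hx)
  have hs2nn : ∀ k, 0 ≤ sSup (S2 k) := by
    intro k
    obtain ⟨x, hx⟩ := hS2ne k
    have hx' : 0 ≤ x := by obtain ⟨σ, rfl⟩ := hx; exact hN2nonneg _
    exact hx'.trans (le_csSup (hS2fin k).bddAbove hx)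
  -- norm equivalence constants
  obtain ⟨C1, hC1, hC1le⟩ := exists_norm_le_norm N1 entryNorm hN1zero hN1add hN1smul
    entryNorm_zero_iff entryNorm_add entryNorm_smul
  obtain ⟨C2, hC2, hC2le⟩ := exists_norm_le_norm entryNorm N1 entryNorm_zero_iff entryNorm_add
    entryNorm_smul hN1zero hN1add hN1smul
  obtain ⟨C3, hC3, hC3le⟩ := exists_norm_le_norm N2 entryNorm hN2zero hN2add hN2smul
    entryNorm_zero_iff entryNorm_add entryNorm_smul
  obtain ⟨C4, hC4, hC4le⟩ := exists_norm_le_norm entryNorm N2 entryNorm_zero_iff entryNorm_add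
    entryNorm_smul hN2zero hN2add hN2smul
  -- key comparisons between the sups
  have key1 : ∀ k, sSup (S1 k) ≤ (C1 * C4) * sSup (S2 k) := by
    intro k
    obtain ⟨σ, hacc, heq⟩ := (hS1ne k).csSup_mem (hS1fin k)
    rw [heq]
    have hmem2 : N2 (Pprod k σ) ∈ S2 k := ⟨σ, rfl⟩
    have hle2 : N2 (Pprod k σ) ≤ sSup (S2 k) := le_csSup (hS2fin k).bddAbove hmem2
    have hent : entryNorm (Aprod k σ) = entryNorm (Pprod k σ) := by
      rw [hkron k σ]
      exact (entryNorm_kronecker _ _ (hF01p k σ).1 hacc).symm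
    calc N1 (Aprod k σ) ≤ C1 * entryNorm (Aprod k σ) := hC1le _
      _ = C1 * entryNorm (Pprod k σ) := by rw [hent]
      _ ≤ C1 * (C4 * N2 (Pprod k σ)) := by
          exact mul_le_mul_of_nonneg_left (hC4le _) hC1.le
      _ = (C1 * C4) * N2 (Pprod k σ) := by ring
      _ ≤ (C1 * C4) * sSup (S2 k) := by
          exact mul_le_mul_of_nonneg_left hle2 (by positivity)
  have key2 : ∀ k, sSup (S2 k) ≤ (C3 * C2) * sSup (S1 k) := by
    intro k
    obtain ⟨σ, heq⟩ := (hS2ne k).csSup_mem (hS2fin k)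
    rw [heq]
    by_cases hacc : Fprod k σ = 0
    · have : Pprod k σ = 0 := by rw [hkron k σ, hacc, Matrix.zero_kronecker]
      rw [this, (hN2zero 0).mpr rfl]
      exact mul_nonneg (mul_nonneg hC3.le hC2.le) (hs1nn k)
    · have hmem1 : N1 (Aprod k σ) ∈ S1 k := ⟨σ, hacc, rfl⟩
      have hle1 : N1 (Aprod k σ) ≤ sSup (S1 k) := le_csSup (hS1fin k).bddAbove hmem1
      have hent : entryNorm (Pprod k σ) = entryNorm (Aprod k σ) := by
        rw [hkron k σ]
        exact entryNorm_kronecker _ _ (hF01p k σ).1 hacc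
      calc N2 (Pprod k σ) ≤ C3 * entryNorm (Pprod k σ) := hC3le _
        _ = C3 * entryNorm (Aprod k σ) := by rw [hent]
        _ ≤ C3 * (C2 * N1 (Aprod k σ)) := by
            exact mul_le_mul_of_nonneg_left (hC2le _) hC3.le
        _ = (C3 * C2) * N1 (Aprod k σ) := by ring
        _ ≤ (C3 * C2) * sSup (S1 k) := by
            exact mul_le_mul_of_nonneg_left hle1 (by positivity)
  -- uniform upper bounds
  set B1 : ℝ := 1 + ∑ i, N1 (A i) with hB1
  set B2 : ℝ := 1 + ∑ i, N2 (Φ i) with hB2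
  have hB1pos : 0 < B1 := by
    rw [hB1]
    have : 0 ≤ ∑ i, N1 (A i) := Finset.sum_nonneg fun i _ => hN1nonneg _
    linarith
  have hB2pos : 0 < B2 := by
    rw [hB2]
    have : 0 ≤ ∑ i, N2 (Φ i) := Finset.sum_nonneg fun i _ => hN2nonneg _
    linarith
  have hbound1 : ∀ k : ℕ, 1 ≤ k → sSup (S1 k) ≤ B1 ^ k := by
    intro k hk
    apply Real.sSup_le _ (by positivity)
    rintro x ⟨σ, _, rfl⟩
    have hlen : ((List.ofFn σ).reverse.map A).length = k := by simp
    have hne : ((List.ofFn σ).reverse.map A) ≠ [] := by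
      apply List.ne_nil_of_length_pos
      rw [hlen]; omega
    have := norm_listProd_le N1 hN1nonneg hN1mul B1 _ hne (by
      intro x hx
      obtain ⟨j, _, rfl⟩ := List.mem_map.mp hx
      rw [hB1]
      have h1 : N1 (A j) ≤ ∑ i, N1 (A i) :=
        Finset.single_le_sum (fun i _ => hN1nonneg (A i)) (Finset.mem_univ j)
      linarith)
    rw [hlen] at this
    calc N1 (Aprod k σ) = N1 ((List.ofFn σ).reverse.map A).prod := by
          rw [hAprod]; simp only; rw [ofFn_reverse_map σ A]
      _ ≤ B1 ^ k := this
  have hbound2 : ∀ k : ℕ, 1 ≤ k → sSup (S2 k) ≤ B2 ^ k := by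
    intro k hk
    apply Real.sSup_le _ (by positivity)
    rintro x ⟨σ, rfl⟩
    have hlen : ((List.ofFn σ).reverse.map Φ).length = k := by simp
    have hne : ((List.ofFn σ).reverse.map Φ) ≠ [] := by
      apply List.ne_nil_of_length_pos
      rw [hlen]; omega
    have := norm_listProd_le N2 hN2nonneg hN2mul B2 _ hne (by
      intro x hx
      obtain ⟨j, _, rfl⟩ := List.mem_map.mp hx
      rw [hB2]
      have h1 : N2 (Φ j) ≤ ∑ i, N2 (Φ i) :=
        Finset.single_le_sum (fun i _ => hN2nonneg (Φ i)) (Finset.mem_univ j)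
      linarith)
    rw [hlen] at this
    calc N2 (Pprod k σ) = N2 ((List.ofFn σ).reverse.map Φ).prod := by
          rw [hPprod]; simp only; rw [ofFn_reverse_map σ Φ]
      _ ≤ B2 ^ k := this
  -- the rpow'd sequences
  set u : ℕ → ℝ := fun k => sSup (S1 k) ^ ((1 : ℝ) / k) with hu
  set v : ℕ → ℝ := fun k => sSup (S2 k) ^ ((1 : ℝ) / k) with hv
  have hu0 : ∀ k, 0 ≤ u k := fun k => Real.rpow_nonneg (hs1nn k) _
  have hv0 : ∀ k, 0 ≤ v k := fun k => Real.rpow_nonneg (hs2nn k) _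
  have hrpow_bound : ∀ (s B : ℝ) (k : ℕ), 1 ≤ k → 0 ≤ s → 0 < B → s ≤ B ^ k →
      s ^ ((1 : ℝ) / k) ≤ B := by
    intro s B k hk hs hB hsB
    have hk0 : (k : ℝ) ≠ 0 := Nat.cast_ne_zero.mpr (by omega)
    have h1 : s ^ ((1 : ℝ) / k) ≤ (B ^ k) ^ ((1 : ℝ) / k) :=
      Real.rpow_le_rpow hs hsB (by positivity)
    calc s ^ ((1 : ℝ) / k) ≤ (B ^ k) ^ ((1 : ℝ) / k) := h1
      _ = (B ^ (k : ℝ)) ^ ((1 : ℝ) / k) := by rw [Real.rpow_natCast]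
      _ = B ^ ((k : ℝ) * ((1 : ℝ) / k)) := by rw [← Real.rpow_mul hB.le]
      _ = B := by rw [mul_one_div, div_self hk0, Real.rpow_one]
  have hub : IsBoundedUnder (· ≤ ·) atTop u := by
    apply isBoundedUnder_of_eventually_le (a := B1)
    filter_upwards [eventually_ge_atTop 1] with k hk
    exact hrpow_bound _ _ k hk (hs1nn k) hB1pos (hbound1 k hk)
  have hvb : IsBoundedUnder (· ≤ ·) atTop v := by
    apply isBoundedUnder_of_eventually_le (a := B2)
    filter_upwards [eventually_ge_atTop 1] with k hk
    exact hrpow_bound _ _ k hk (hs2nn k) hB2pos (hbound2 k hk)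
  have hkey1 : ∀ k : ℕ, 1 ≤ k → u k ≤ (C1 * C4) ^ ((1 : ℝ) / k) * v k := by
    intro k hk
    have h1 : sSup (S1 k) ^ ((1:ℝ)/k) ≤ ((C1 * C4) * sSup (S2 k)) ^ ((1:ℝ)/k) :=
      Real.rpow_le_rpow (hs1nn k) (key1 k) (by positivity)
    calc u k ≤ ((C1 * C4) * sSup (S2 k)) ^ ((1:ℝ)/k) := h1
      _ = (C1 * C4) ^ ((1:ℝ)/k) * sSup (S2 k) ^ ((1:ℝ)/k) :=
          Real.mul_rpow (by positivity) (hs2nn k)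
  have hkey2 : ∀ k : ℕ, 1 ≤ k → v k ≤ (C3 * C2) ^ ((1 : ℝ) / k) * u k := by
    intro k hk
    have h1 : sSup (S2 k) ^ ((1:ℝ)/k) ≤ ((C3 * C2) * sSup (S1 k)) ^ ((1:ℝ)/k) :=
      Real.rpow_le_rpow (hs2nn k) (key2 k) (by positivity)
    calc v k ≤ ((C3 * C2) * sSup (S1 k)) ^ ((1:ℝ)/k) := h1
      _ = (C3 * C2) ^ ((1:ℝ)/k) * sSup (S1 k) ^ ((1:ℝ)/k) :=
          Real.mul_rpow (by positivity) (hs1nn k)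
  exact le_antisymm
    (limsup_le_limsup_of_rpow_factor u v (C1 * C4) (by positivity) hu0 hv0 hvb hub hkey1)
    (limsup_le_limsup_of_rpow_factor v u (C3 * C2) (by positivity) hv0 hu0 hub hvb hkey2)
end

section
/- Let A_i ∈ ℝ^{n×n}, F_i ∈ ℝ^{ℓ×ℓ} be 0-1 matrices with at most one 1 per column, Φ_i = F_i ⊗ A_i, and let σ : ℕ → {1,...,m}. If liminf_{k→∞} ‖Φ_{σ₁}⋯Φ_{σ_k}‖₂^{1/k} ≥ c for some c > 0, then liminf_{k→∞} ‖A_{σ₁}⋯A_{σ_k}‖₂^{1/k} ≥ c, and moreover every finite prefix σ₁⋯σ_k satisfies F_{σ₁}⋯F_{σ_k} ≠ 0. -/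
open Kronecker
open scoped Matrix.Norms.L2Operator

-- coordinate bound
lemma euclid_coord_le {I : Type*} [Fintype I] (y : EuclideanSpace ℝ I) (u : I) : |y u| ≤ ‖y‖ := by
  rw [EuclideanSpace.norm_eq]
  have h1 : |y u| = Real.sqrt (‖y u‖ ^ 2) := by
    rw [Real.sqrt_sq_eq_abs, Real.norm_eq_abs, abs_abs]
  rw [h1]
  apply Real.sqrt_le_sqrt
  exact Finset.single_le_sum (f := fun i => ‖y i‖ ^ 2)
    (fun i _ => sq_nonneg _) (Finset.mem_univ u)

-- euclidean norm ≤ sum of abs coords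
lemma euclid_norm_le_sum {I : Type*} [Fintype I] (y : EuclideanSpace ℝ I) : ‖y‖ ≤ ∑ u, |y u| := by
  rw [EuclideanSpace.norm_eq]
  have h : ∑ u, ‖y u‖ ^ 2 ≤ (∑ u, |y u|) ^ 2 := by
    have := Finset.sum_sq_le_sq_sum_of_nonneg (s := Finset.univ)
      (f := fun u => |y u|) (fun i _ => abs_nonneg _)
    simpa [Real.norm_eq_abs] using this
  calc Real.sqrt (∑ u, ‖y u‖ ^ 2) ≤ Real.sqrt ((∑ u, |y u|) ^ 2) := Real.sqrt_le_sqrt h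
    _ = abs (∑ u, |y u|) := Real.sqrt_sq_eq_abs _
    _ = ∑ u, |y u| := abs_of_nonneg (Finset.sum_nonneg fun i _ => abs_nonneg _)

-- entry bound
lemma entry_le_l2 {I J : Type*} [Fintype I] [Fintype J] [DecidableEq J] (M : Matrix I J ℝ) (u : I) (v : J) :
    |M u v| ≤ ‖M‖ := by
  have hx : ‖(EuclideanSpace.single v (1:ℝ))‖ = 1 := by
    simp [EuclideanSpace.norm_single]
  have h := Matrix.l2_opNorm_mulVec M (EuclideanSpace.single v (1:ℝ))
  rw [hx, mul_one] at h
  set y : EuclideanSpace ℝ I :=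
    (EuclideanSpace.equiv I ℝ).symm (M.mulVec (EuclideanSpace.single v (1:ℝ))) with hy
  refine le_trans (le_trans ?_ (euclid_coord_le y u)) h
  have he : y u = M u v := by
    show (M.mulVec (Pi.single v (1:ℝ))) u = M u v
    simp
  rw [he]

-- op norm ≤ sum of absolute entries
lemma l2_le_entry_sum {I J : Type*} [Fintype I] [Fintype J] [DecidableEq J] (M : Matrix I J ℝ) :
    ‖M‖ ≤ ∑ u, ∑ v, |M u v| := by
  rw [Matrix.l2_opNorm_def]
  apply ContinuousLinearMap.opNorm_le_bound
  · exact Finset.sum_nonneg fun u _ => Finset.sum_nonneg fun v _ => abs_nonneg _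
  · intro x
    set y : EuclideanSpace ℝ I := (Matrix.toEuclideanLin M) x with hy
    show ‖y‖ ≤ _
    have hyu : ∀ u, y u = ∑ v, M u v * x v := by
      intro u
      rw [hy, Matrix.toEuclideanLin_apply]
      rfl
    calc ‖y‖ ≤ ∑ u, |y u| := euclid_norm_le_sum y
      _ ≤ ∑ u, ∑ v, |M u v| * ‖x‖ := by
          apply Finset.sum_le_sum
          intro u _
          rw [hyu u]
          refine le_trans (Finset.abs_sum_le_sum_abs _ _) ?_
          apply Finset.sum_le_sum
          intro v _
          rw [abs_mul]
          exact mul_le_mul_of_nonneg_left (euclid_coord_le x v) (abs_nonneg _)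
      _ = (∑ u, ∑ v, |M u v|) * ‖x‖ := by rw [Finset.sum_mul]; simp [Finset.sum_mul]

def GoodM {ℓ : ℕ} (M : Matrix (Fin ℓ) (Fin ℓ) ℝ) : Prop :=
  (∀ s t, M s t = 0 ∨ M s t = 1) ∧ ∀ t s s', M s t ≠ 0 → M s' t ≠ 0 → s = s'

lemma goodM_one {ℓ : ℕ} : GoodM (1 : Matrix (Fin ℓ) (Fin ℓ) ℝ) := by
  constructor
  · intro s t
    by_cases h : s = t <;> simp [Matrix.one_apply, h]
  · intro t s s' hs hs'
    rw [Matrix.one_apply] at hs hs'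
    by_cases h : s = t
    · by_cases h' : s' = t
      · rw [h, h']
      · simp [h'] at hs'
    · simp [h] at hs

lemma goodM_mul {ℓ : ℕ} {M N : Matrix (Fin ℓ) (Fin ℓ) ℝ} (hM : GoodM M) (hN : GoodM N) :
    GoodM (M * N) := by
  have col : ∀ t : Fin ℓ, (∀ s, (M * N) s t = 0) ∨ ∃ u₀, ∀ s, (M * N) s t = M s u₀ := by
    intro t
    by_cases h : ∃ u₀, N u₀ t ≠ 0
    · obtain ⟨u₀, hu⟩ := h
      refine Or.inr ⟨u₀, fun s => ?_⟩
      rw [Matrix.mul_apply, Finset.sum_eq_single u₀]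
      · rcases hN.1 u₀ t with h0 | h1
        · exact absurd h0 hu
        · rw [h1, mul_one]
      · intro u _ hne
        have hz : N u t = 0 := by
          by_contra h'
          exact hne (hN.2 t u u₀ h' hu)
        rw [hz, mul_zero]
      · intro h; exact absurd (Finset.mem_univ _) h
    · push_neg at h
      refine Or.inl fun s => ?_
      rw [Matrix.mul_apply]
      exact Finset.sum_eq_zero fun u _ => by rw [h u, mul_zero]
  constructor
  · intro s t
    rcases col t with h | ⟨u₀, h⟩
    · exact Or.inl (h s)
    · rw [h s]; exact hM.1 s u₀
  · intro t s s' hs hs'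
    rcases col t with h | ⟨u₀, h⟩
    · exact absurd (h s) hs
    · rw [h s] at hs; rw [h s'] at hs'
      exact hM.2 u₀ s s' hs hs'

-- product split: prod over Fin (k+1) = prod over Fin k * last
lemma prod_ofFn_succ {α : Type*} [Monoid α] (g : ℕ → α) (k : ℕ) :
    (List.ofFn fun i : Fin (k+1) => g i).prod
      = (List.ofFn fun i : Fin k => g i).prod * g k := by
  rw [List.ofFn_succ', List.prod_concat]
  simp [Fin.coe_castSucc, Fin.val_last]

section main
variable {n ℓ m : ℕ} (A : Fin m → Matrix (Fin n) (Fin n) ℝ)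
  (F : Fin m → Matrix (Fin ℓ) (Fin ℓ) ℝ) (σ : ℕ → Fin m)

lemma goodM_prod (hg : ∀ j, GoodM (F j)) (k : ℕ) :
    GoodM (List.ofFn fun i : Fin k => F (σ i)).prod := by
  induction k with
  | zero => simpa using goodM_one
  | succ k ih =>
      rw [prod_ofFn_succ (fun j => F (σ j))]
      exact goodM_mul ih (hg _)

lemma kron_factor (k : ℕ) :
    (List.ofFn fun i : Fin k => F (σ i) ⊗ₖ A (σ i)).prod
      = (List.ofFn fun i : Fin k => F (σ i)).prod ⊗ₖ (List.ofFn fun i : Fin k => A (σ i)).prod := by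
  induction k with
  | zero => simp [Matrix.one_kronecker_one]
  | succ k ih =>
      rw [prod_ofFn_succ (fun j => F (σ j) ⊗ₖ A (σ j)),
        prod_ofFn_succ (fun j => F (σ j)), prod_ofFn_succ (fun j => A (σ j)), ih,
        ← Matrix.mul_kronecker_mul]

-- prefix zero propagates
lemma Fprod_zero_mono {k : ℕ} (hk : (List.ofFn fun i : Fin k => F (σ i)).prod = 0)
    {k' : ℕ} (hkk : k ≤ k') : (List.ofFn fun i : Fin k' => F (σ i)).prod = 0 := by
  induction k' with
  | zero => exact le_antisymm (by omega) (Nat.zero_le k) ▸ hk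
  | succ k' ih =>
      rcases Nat.lt_or_ge k (k' + 1) with h | h
      · rw [prod_ofFn_succ (fun j => F (σ j)), ih (by omega), zero_mul]
      · have : k = k' + 1 := by omega
        subst this; exact hk

end main

lemma l2_norm_one_le {p : ℕ} : ‖(1 : Matrix (Fin p) (Fin p) ℝ)‖ ≤ 1 := by
  rw [Matrix.cstar_norm_def, map_one]
  exact ContinuousLinearMap.norm_id_le

section bound
variable {m p : ℕ} (M : Fin m → Matrix (Fin p) (Fin p) ℝ) (σ : ℕ → Fin m)

lemma prod_norm_le_pow :
    ∃ B : ℝ, 1 ≤ B ∧ ∀ k : ℕ, ‖(List.ofFn fun i : Fin k => M (σ i)).prod‖ ≤ B ^ k := by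
  refine ⟨1 + ∑ j, ‖M j‖, le_add_of_nonneg_right (Finset.sum_nonneg fun j _ => norm_nonneg _),
    fun k => ?_⟩
  have hMle : ∀ j, ‖M j‖ ≤ 1 + ∑ j', ‖M j'‖ := by
    intro j
    have := Finset.single_le_sum (f := fun j' => ‖M j'‖) (fun j' _ => norm_nonneg _)
      (Finset.mem_univ j)
    linarith
  induction k with
  | zero => simpa using l2_norm_one_le
  | succ k ih =>
      rw [prod_ofFn_succ (fun j => M (σ j)), pow_succ]
      calc ‖(List.ofFn fun i : Fin k => M (σ i)).prod * M (σ k)‖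
          ≤ ‖(List.ofFn fun i : Fin k => M (σ i)).prod‖ * ‖M (σ k)‖ := norm_mul_le _ _
        _ ≤ (1 + ∑ j, ‖M j‖) ^ k * (1 + ∑ j, ‖M j‖) := by
            apply mul_le_mul ih (hMle _) (norm_nonneg _) (pow_nonneg (by positivity) _)

lemma rpow_prod_bdd :
    ∃ B : ℝ, 1 ≤ B ∧ ∀ k : ℕ,
      ‖(List.ofFn fun i : Fin k => M (σ i)).prod‖ ^ ((1:ℝ)/k) ≤ B := by
  obtain ⟨B, hB1, hB⟩ := prod_norm_le_pow M σ
  refine ⟨B, hB1, fun k => ?_⟩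
  rcases Nat.eq_zero_or_pos k with rfl | hk
  · simpa using hB1
  · have h0 : (0:ℝ) ≤ B := le_trans zero_le_one hB1
    calc ‖(List.ofFn fun i : Fin k => M (σ i)).prod‖ ^ ((1:ℝ)/k)
        ≤ (B ^ k) ^ ((1:ℝ)/k) :=
          Real.rpow_le_rpow (norm_nonneg _) (hB k) (by positivity)
      _ = B := by
          rw [← Real.rpow_natCast B k, ← Real.rpow_mul h0]
          rw [mul_one_div, div_self (by exact_mod_cast hk.ne'), Real.rpow_one]

end bound

lemma kron_norm_le {ℓ n : ℕ} (X : Matrix (Fin ℓ) (Fin ℓ) ℝ) (Y : Matrix (Fin n) (Fin n) ℝ)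
    (hX : ∀ s t, |X s t| ≤ 1) : ‖X ⊗ₖ Y‖ ≤ ((ℓ*n)^2 : ℕ) * ‖Y‖ := by
  refine le_trans (l2_le_entry_sum _) ?_
  have hentry : ∀ (p1 p2 : Fin ℓ × Fin n), |(X ⊗ₖ Y) p1 p2| ≤ ‖Y‖ := by
    rintro ⟨s, u⟩ ⟨t, v⟩
    rw [Matrix.kroneckerMap_apply, abs_mul]
    calc |X s t| * |Y u v| ≤ 1 * ‖Y‖ :=
          mul_le_mul (hX s t) (entry_le_l2 Y u v) (abs_nonneg _)
            zero_le_one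
      _ = ‖Y‖ := one_mul _
  calc ∑ p1 : Fin ℓ × Fin n, ∑ p2 : Fin ℓ × Fin n, |(X ⊗ₖ Y) p1 p2|
      ≤ ∑ _p1 : Fin ℓ × Fin n, ∑ _p2 : Fin ℓ × Fin n, ‖Y‖ := by
        exact Finset.sum_le_sum fun p1 _ => Finset.sum_le_sum fun p2 _ => hentry p1 p2
    _ = ((ℓ*n)^2 : ℕ) * ‖Y‖ := by
        simp [Finset.sum_const, Finset.card_univ]
        ring

/-- Let `Φ i = F i ⊗ A i` with `F i` 0-1 matrices having at most one `1` per
column. If `liminf_{k→∞} ‖Φ (σ 0) ⋯ Φ (σ (k-1))‖₂^{1/k} ≥ c` for some `c > 0`,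
then the same asymptotic lower bound holds for the products of the `A`
matrices, and every finite product of the `F` matrices along `σ` is nonzero. -/
theorem lifted_growth_transfers_and_accepted
    (n ℓ m : ℕ)
    (A : Fin m → Matrix (Fin n) (Fin n) ℝ)
    (F : Fin m → Matrix (Fin ℓ) (Fin ℓ) ℝ)
    (hF01 : ∀ j s t, F j s t = 0 ∨ F j s t = 1)
    (hFcol : ∀ j t s s', F j s t ≠ 0 → F j s' t ≠ 0 → s = s')
    (Φ : Fin m → Matrix (Fin ℓ × Fin n) (Fin ℓ × Fin n) ℝ)
    (hΦ : ∀ i, Φ i = F i ⊗ₖ A i)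
    (σ : ℕ → Fin m)
    (c : ℝ) (hc : 0 < c)
    (hliminf : c ≤ Filter.liminf
      (fun k : ℕ => ‖(List.ofFn fun i : Fin k => Φ (σ i)).prod‖ ^ ((1 : ℝ) / k))
      Filter.atTop) :
    (c ≤ Filter.liminf
      (fun k : ℕ => ‖(List.ofFn fun i : Fin k => A (σ i)).prod‖ ^ ((1 : ℝ) / k))
      Filter.atTop) ∧
    (∀ k : ℕ, (List.ofFn fun i : Fin k => F (σ i)).prod ≠ 0) := by
  classical
  set Fp : ℕ → Matrix (Fin ℓ) (Fin ℓ) ℝ :=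
    fun k => (List.ofFn fun i : Fin k => F (σ i)).prod with hFp
  set Ap : ℕ → Matrix (Fin n) (Fin n) ℝ :=
    fun k => (List.ofFn fun i : Fin k => A (σ i)).prod with hAp
  set f : ℕ → ℝ :=
    fun k => ‖(List.ofFn fun i : Fin k => Φ (σ i)).prod‖ ^ ((1 : ℝ) / k) with hfdef
  set g : ℕ → ℝ := fun k => ‖Ap k‖ ^ ((1 : ℝ) / k) with hgdef
  have hgood : ∀ j, GoodM (F j) := fun j => ⟨hF01 j, hFcol j⟩
  have hΦp : ∀ k : ℕ, (List.ofFn fun i : Fin k => Φ (σ i)).prod = (Fp k) ⊗ₖ (Ap k) := by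
    intro k
    have : (fun i : Fin k => Φ (σ i)) = fun i : Fin k => F (σ i) ⊗ₖ A (σ i) :=
      funext fun i => hΦ _
    rw [this, kron_factor]
  have hf : ∀ k : ℕ, f k = ‖(Fp k) ⊗ₖ (Ap k)‖ ^ ((1 : ℝ) / k) := by
    intro k; rw [hfdef]; simp only []; rw [hΦp k]
  -- the entries of Fp are bounded by 1
  have hFpent : ∀ k s t, |Fp k s t| ≤ 1 := by
    intro k s t
    show |(List.ofFn fun i : Fin k => F (σ i)).prod s t| ≤ 1
    rcases (goodM_prod F σ hgood k).1 s t with h | h <;> rw [h] <;> norm_num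
  -- master inequality
  set C : ℝ := ((ℓ * n) ^ 2 : ℕ) + 1 with hC
  have hC1 : (1:ℝ) ≤ C := by
    have : (0:ℝ) ≤ (((ℓ * n) ^ 2 : ℕ) : ℝ) := Nat.cast_nonneg _
    rw [hC]; linarith
  have hC0 : (0:ℝ) < C := by positivity
  have hmaster : ∀ k : ℕ, ‖(Fp k) ⊗ₖ (Ap k)‖ ≤ C * ‖Ap k‖ := by
    intro k
    refine le_trans (kron_norm_le (Fp k) (Ap k) (hFpent k)) ?_
    have : (0:ℝ) ≤ ‖Ap k‖ := norm_nonneg _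
    nlinarith
  -- bounds on g
  obtain ⟨D, hD1, hD⟩ := rpow_prod_bdd A σ
  have hgcob : Filter.IsCoboundedUnder (· ≥ ·) Filter.atTop g :=
    Filter.isCoboundedUnder_ge_of_eventually_le Filter.atTop
      (Filter.Eventually.of_forall fun k => hD k)
  have hg0 : ∀ k, 0 ≤ g k := fun k => Real.rpow_nonneg (norm_nonneg _) _
  have hf0 : ∀ k, 0 ≤ f k := fun k => Real.rpow_nonneg (norm_nonneg _) _
  constructor
  · -- liminf transfer
    have hkey : ∀ k : ℕ, 1 ≤ k → f k ≤ C ^ ((1:ℝ)/k) * g k := by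
      intro k hk
      rw [hf k, hgdef]
      calc ‖(Fp k) ⊗ₖ (Ap k)‖ ^ ((1:ℝ)/k)
          ≤ (C * ‖Ap k‖) ^ ((1:ℝ)/k) :=
            Real.rpow_le_rpow (norm_nonneg _) (hmaster k) (by positivity)
        _ = C ^ ((1:ℝ)/k) * ‖Ap k‖ ^ ((1:ℝ)/k) :=
            Real.mul_rpow (le_of_lt hC0) (norm_nonneg _)
    have htend : Filter.Tendsto (fun k : ℕ => C ^ ((1:ℝ)/k)) Filter.atTop (nhds 1) := by
      have h1 : Filter.Tendsto (fun k : ℕ => (1:ℝ)/k) Filter.atTop (nhds 0) :=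
        tendsto_one_div_atTop_nhds_zero_nat
      have h2 : ContinuousAt (fun y : ℝ => C ^ y) 0 :=
        Real.continuousAt_const_rpow (ne_of_gt hC0)
      have := h2.tendsto.comp h1
      rwa [Real.rpow_zero] at this
    refine le_of_forall_lt_imp_le_of_dense fun b hb => ?_
    rcases le_or_gt b 0 with hb0 | hb0
    · exact le_trans hb0 (Filter.le_liminf_of_le hgcob
        (Filter.Eventually.of_forall hg0))
    · set b' : ℝ := (b + c) / 2 with hb'
      have hb'1 : b < b' := by rw [hb']; linarith
      have hb'2 : b' < c := by rw [hb']; linarith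
      have hfbd : Filter.IsBoundedUnder (· ≥ ·) Filter.atTop f :=
        Filter.isBoundedUnder_of ⟨0, fun k => hf0 k⟩
      have hflow : ∀ᶠ k in Filter.atTop, b' < f k :=
        Filter.eventually_lt_of_lt_liminf (lt_of_lt_of_le hb'2 hliminf) hfbd
      have hCev : ∀ᶠ k : ℕ in Filter.atTop, C ^ ((1:ℝ)/(k:ℝ)) < b'/b :=
        htend.eventually_lt_const ((one_lt_div hb0).mpr hb'1)
      have hev : ∀ᶠ k in Filter.atTop, b ≤ g k := by
        filter_upwards [hflow, hCev, Filter.eventually_ge_atTop 1] with k h1 h2 h3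
        have hcpow : 0 < C ^ ((1:ℝ)/k) := Real.rpow_pos_of_pos hC0 _
        have e1 : b * (C ^ ((1:ℝ)/k)) < b' := by
          have h4 := mul_lt_mul_of_pos_left h2 hb0
          have h5 : b * (b'/b) = b' := by field_simp
          linarith
        have e2 : b * (C ^ ((1:ℝ)/k)) < C ^ ((1:ℝ)/k) * g k :=
          lt_of_lt_of_le (lt_trans e1 h1) (hkey k h3)
        have e3 : b < g k := by
          rw [mul_comm] at e2
          exact (mul_lt_mul_iff_right₀ hcpow).mp e2
        exact le_of_lt e3
      exact Filter.le_liminf_of_le hgcob hev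
  · -- nonzero F-products
    intro k hk0
    have hzero : ∀ k' : ℕ, k ≤ k' → f k' = 0 ∨ k' = 0 := by
      intro k' hkk
      rcases Nat.eq_zero_or_pos k' with rfl | hpos
      · exact Or.inr rfl
      · left
        have hFz : Fp k' = 0 := Fprod_zero_mono F σ hk0 hkk
        rw [hf k', hFz, Matrix.zero_kronecker, norm_zero]
        exact Real.zero_rpow (by positivity)
    have hev : ∀ᶠ k' in Filter.atTop, f k' = (fun _ : ℕ => (0:ℝ)) k' := by
      rw [Filter.eventually_atTop]
      exact ⟨max k 1, fun k' hk' => by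
        rcases hzero k' (le_trans (le_max_left k 1) hk') with h | h
        · exact h
        · omega⟩
    have : Filter.liminf f Filter.atTop = 0 := by
      rw [Filter.liminf_congr hev, Filter.liminf_const]
    rw [this] at hliminf
    linarith
end

section
/- For any finite set of matrices A = {A₁,...,A_m} ⊂ ℝ^{n×n}, DFA M, and T ∈ ℕ_{>0}: if c = c₁⋯c_T is an M-accepted word such that the infinite periodic repetition c^∞ is also M-accepted, then ρ(A_{c_T}⋯A_{c₁})^{1/T} ≤ ρ(A, M), i.e., the T-th root of the spectral radius of the matrix product along any such cycle is a lower bound for the constrained joint spectral radius. -/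
/-- The spectral radius of a real square matrix, computed via its complex
spectrum. -/
noncomputable def specRad {N : Type*} [Fintype N] [DecidableEq N]
    (A : Matrix N N ℝ) : ℝ :=
  (spectralRadius ℂ (A.map (algebraMap ℝ ℂ))).toReal

open scoped ENNReal NNReal

/-- Type synonym for real matrices, used to install a custom norm. -/
def MatR (n : ℕ) : Type := Matrix (Fin n) (Fin n) ℝ

instance (n : ℕ) : AddCommGroup (MatR n) :=
  inferInstanceAs (AddCommGroup (Matrix (Fin n) (Fin n) ℝ))

noncomputable instance (n : ℕ) : Module ℝ (MatR n) :=
  inferInstanceAs (Module ℝ (Matrix (Fin n) (Fin n) ℝ))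

instance (n : ℕ) : FiniteDimensional ℝ (MatR n) :=
  inferInstanceAs (Module.Finite ℝ (Matrix (Fin n) (Fin n) ℝ))

lemma gelfand_bound (n : ℕ)
    (N : Matrix (Fin n) (Fin n) ℝ → ℝ)
    (hNnonneg : ∀ X, 0 ≤ N X)
    (hNzero : ∀ X, N X = 0 ↔ X = 0)
    (hNadd : ∀ X Y, N (X + Y) ≤ N X + N Y)
    (hNsmul : ∀ (r : ℝ) X, N (r • X) = |r| * N X) :
    ∃ K : ℝ, 1 ≤ K ∧ ∀ (B : Matrix (Fin n) (Fin n) ℝ) (jj : ℕ),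
      specRad B ^ (jj + 1) ≤ K * N (B ^ (jj + 1)) := by
  classical
  let F : AddGroupNorm (MatR n) :=
  { toFun := N
    map_zero' := (hNzero 0).mpr rfl
    add_le' := hNadd
    neg' := fun X => by
      show N (-X) = N X
      rw [← neg_one_smul ℝ X]; exact (hNsmul (-1) X).trans (by simp)
    eq_zero_of_map_eq_zero' := fun X h => (hNzero X).mp h }
  letI : NormedAddCommGroup (MatR n) := F.toNormedAddCommGroup
  have hnorm : ∀ X : MatR n, ‖X‖ = N X := fun _ => rfl
  letI : NormedSpace ℝ (MatR n) :=
    ⟨fun r X => by rw [hnorm, hnorm, Real.norm_eq_abs]; exact (hNsmul r X).le⟩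
  let L : MatR n →ₗ[ℝ] (Fin n → Fin n → ℝ) :=
  { toFun := fun X => X
    map_add' := fun _ _ => rfl
    map_smul' := fun _ _ => rfl }
  let L' : MatR n →L[ℝ] (Fin n → Fin n → ℝ) := LinearMap.toContinuousLinearMap L
  -- coordinate bound
  have hcoord : ∀ (X : Matrix (Fin n) (Fin n) ℝ) (i j : Fin n),
      |X i j| ≤ ‖L'‖ * N X := by
    intro X i j
    let Y : Fin n → Fin n → ℝ := X
    have h1 : |X i j| ≤ ‖Y‖ := by
      calc |X i j| = ‖Y i j‖ := rfl
        _ ≤ ‖Y i‖ := norm_le_pi_norm (Y i) j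
        _ ≤ ‖Y‖ := norm_le_pi_norm Y i
    have h2 := L'.le_opNorm (X : MatR n)
    replace h2 : ‖L' X‖ ≤ ‖L'‖ * N X := h2
    exact h1.trans h2
  letI : NormedRing (Matrix (Fin n) (Fin n) ℂ) := Matrix.linftyOpNormedRing
  letI : NormedAlgebra ℂ (Matrix (Fin n) (Fin n) ℂ) := Matrix.linftyOpNormedAlgebra
  letI : CompleteSpace (Matrix (Fin n) (Fin n) ℂ) := FiniteDimensional.complete ℂ _
  have hXc : ∀ (Y : Matrix (Fin n) (Fin n) ℂ), ‖Y‖ ≤ ∑ i, ∑ j, ‖Y i j‖ := by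
    intro Y
    have h : (Finset.univ.sup fun i => ∑ j, ‖Y i j‖₊) ≤ ∑ i, ∑ j, ‖Y i j‖₊ :=
      Finset.sup_le fun i _ =>
        Finset.single_le_sum (f := fun i => ∑ j, ‖Y i j‖₊)
          (fun _ _ => zero_le) (Finset.mem_univ i)
    calc ‖Y‖ = ((Finset.univ.sup fun i => ∑ j, ‖Y i j‖₊ : ℝ≥0) : ℝ) :=
          Matrix.linfty_opNorm_def Y
      _ ≤ ((∑ i, ∑ j, ‖Y i j‖₊ : ℝ≥0) : ℝ) := by exact_mod_cast h
      _ = ∑ i, ∑ j, ‖Y i j‖ := by push_cast; rfl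
  set C : ℝ := (n : ℝ) * n * ‖L'‖ with hCdef
  have hC : ∀ X : Matrix (Fin n) (Fin n) ℝ, ‖X.map (algebraMap ℝ ℂ)‖ ≤ C * N X := by
    intro X
    refine (hXc _).trans ?_
    have : ∀ i j : Fin n, ‖(X.map (algebraMap ℝ ℂ)) i j‖ = |X i j| := by
      intro i j
      show ‖((X i j : ℝ) : ℂ)‖ = |X i j|
      simp
    calc ∑ i, ∑ j, ‖(X.map (algebraMap ℝ ℂ)) i j‖ = ∑ _i : Fin n, ∑ _j : Fin n, |X _i _j| := by
          simp_rw [this]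
      _ ≤ ∑ _i : Fin n, ∑ _j : Fin n, ‖L'‖ * N X :=
          Finset.sum_le_sum fun i _ => Finset.sum_le_sum fun j _ => hcoord X i j
      _ = C * N X := by
          simp [Finset.sum_const, hCdef]
          ring
  have hCnonneg : 0 ≤ C := by positivity
  refine ⟨C * ‖(1 : Matrix (Fin n) (Fin n) ℂ)‖ + 1,
    le_add_of_nonneg_left (mul_nonneg hCnonneg (norm_nonneg _)), ?_⟩
  intro B jj
  have hpowmap : ∀ k : ℕ,
      (B.map (algebraMap ℝ ℂ)) ^ k = (B ^ k).map (algebraMap ℝ ℂ) := by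
    intro k
    have := map_pow ((algebraMap ℝ ℂ).mapMatrix) B k
    simpa [RingHom.mapMatrix_apply] using this.symm
  have h1 := spectrum.spectralRadius_le_pow_nnnorm_pow_one_div ℂ
    (B.map (algebraMap ℝ ℂ)) jj
  have hexp : ((1 / ((jj : ℝ) + 1)) * ((jj : ℕ) + 1 : ℕ)) = 1 := by
    rw [one_div]
    push_cast
    rw [inv_mul_cancel₀ (by positivity)]
  have h2 : spectralRadius ℂ (B.map (algebraMap ℝ ℂ)) ^ (jj + 1)
      ≤ (‖(B.map (algebraMap ℝ ℂ)) ^ (jj + 1)‖₊ : ℝ≥0∞) *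
        (‖(1 : Matrix (Fin n) (Fin n) ℂ)‖₊ : ℝ≥0∞) := by
    calc spectralRadius ℂ (B.map (algebraMap ℝ ℂ)) ^ (jj + 1)
        ≤ ((‖(B.map (algebraMap ℝ ℂ)) ^ (jj + 1)‖₊ : ℝ≥0∞) ^ (1 / ((jj : ℝ) + 1)) *
            (‖(1 : Matrix (Fin n) (Fin n) ℂ)‖₊ : ℝ≥0∞) ^ (1 / ((jj : ℝ) + 1))) ^ (jj + 1) :=
          pow_le_pow_left' h1 _
      _ = _ := by
          rw [mul_pow,
            ← ENNReal.rpow_natCast ((‖(B.map (algebraMap ℝ ℂ)) ^ (jj + 1)‖₊ : ℝ≥0∞) ^ (1 / ((jj : ℝ) + 1))) (jj + 1),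
            ← ENNReal.rpow_natCast ((‖(1 : Matrix (Fin n) (Fin n) ℂ)‖₊ : ℝ≥0∞) ^ (1 / ((jj : ℝ) + 1))) (jj + 1),
            ← ENNReal.rpow_mul, ← ENNReal.rpow_mul, hexp, ENNReal.rpow_one, ENNReal.rpow_one]
  have h3 : specRad B ^ (jj + 1)
      ≤ ‖(B ^ (jj + 1)).map (algebraMap ℝ ℂ)‖ * ‖(1 : Matrix (Fin n) (Fin n) ℂ)‖ := by
    have h4 := ENNReal.toReal_mono
      (ENNReal.mul_ne_top ENNReal.coe_ne_top ENNReal.coe_ne_top) h2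
    rw [ENNReal.toReal_pow, ENNReal.toReal_mul, ENNReal.coe_toReal, ENNReal.coe_toReal,
      coe_nnnorm, coe_nnnorm, hpowmap] at h4
    exact h4
  calc specRad B ^ (jj + 1)
      ≤ ‖(B ^ (jj + 1)).map (algebraMap ℝ ℂ)‖ * ‖(1 : Matrix (Fin n) (Fin n) ℂ)‖ := h3
    _ ≤ (C * N (B ^ (jj + 1))) * ‖(1 : Matrix (Fin n) (Fin n) ℂ)‖ :=
        mul_le_mul_of_nonneg_right (hC _) (norm_nonneg _)
    _ = (C * ‖(1 : Matrix (Fin n) (Fin n) ℂ)‖) * N (B ^ (jj + 1)) := by ring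
    _ ≤ (C * ‖(1 : Matrix (Fin n) (Fin n) ℂ)‖ + 1) * N (B ^ (jj + 1)) :=
        mul_le_mul_of_nonneg_right (le_add_of_nonneg_right zero_le_one) (hNnonneg _)



lemma ofFn_periodic_prod {M : Type*} [Monoid M] (g : ℕ → M) (T : ℕ)
    (hg : ∀ x, g (x + T) = g x) :
    ∀ j : ℕ, (List.ofFn fun i : Fin (j * T) => g i.val).reverse.prod
      = ((List.ofFn fun i : Fin T => g i.val).reverse.prod) ^ j := by
  have hper : ∀ (a x : ℕ), g (x + a * T) = g x := by
    intro a
    induction a with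
    | zero => simp
    | succ a ih =>
        intro x
        rw [Nat.succ_mul, ← Nat.add_assoc, hg, ih]
  intro j
  induction j with
  | zero =>
      rw [List.ofFn_congr (Nat.zero_mul T)]
      simp
  | succ j ih =>
      rw [List.ofFn_congr (Nat.succ_mul j T), List.ofFn_add, List.reverse_append,
        List.prod_append, pow_succ']
      simp only [Fin.coe_cast, Fin.coe_castAdd, Fin.coe_natAdd, Fin.coe_castLE]
      have h2 : (fun i : Fin T => g (j * T + i.val)) = fun i : Fin T => g i.val := by
        funext i
        rw [Nat.add_comm, hper]
      rw [h2, ih]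

/-- If `c = c₁ ⋯ c_T` is a word accepted by the DFA (with partial transition
function `f`) whose infinite periodic repetition `c^∞` is also accepted, then
the `T`-th root of the spectral radius of the matrix product along the cycle
is a lower bound for the constrained joint spectral radius
`ρ(A, M) = limsup_k (max over accepted words σ of length k of ‖A_σ‖)^{1/k}`,
taken with respect to any sub-multiplicative matrix norm `N`. -/
theorem cycle_spectral_radius_le_cjsr
    (n ℓ m T : ℕ) (hT : 0 < T)
    (f : Fin ℓ → Fin m → Option (Fin ℓ))
    (A : Fin m → Matrix (Fin n) (Fin n) ℝ)
    (N : Matrix (Fin n) (Fin n) ℝ → ℝ)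
    (hNnonneg : ∀ X, 0 ≤ N X)
    (hNzero : ∀ X, N X = 0 ↔ X = 0)
    (hNadd : ∀ X Y, N (X + Y) ≤ N X + N Y)
    (hNsmul : ∀ (r : ℝ) X, N (r • X) = |r| * N X)
    (hNmul : ∀ X Y, N (X * Y) ≤ N X * N Y)
    (c : Fin T → Fin m)
    (hc : ∃ q : Fin (T + 1) → Fin ℓ,
      ∀ i : Fin T, f (q i.castSucc) (c i) = some (q i.succ))
    (hcinf : ∃ q : ℕ → Fin ℓ,
      ∀ i : ℕ, f (q i) (c ⟨i % T, Nat.mod_lt i hT⟩) = some (q (i + 1))) :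
    specRad ((List.ofFn fun i => A (c i)).reverse).prod ^ ((1 : ℝ) / T) ≤
      Filter.limsup
        (fun k : ℕ =>
          (sSup {x : ℝ | ∃ σ : Fin k → Fin m,
              (∃ q : Fin (k + 1) → Fin ℓ,
                ∀ i : Fin k, f (q i.castSucc) (σ i) = some (q i.succ)) ∧
              x = N ((List.ofFn fun i => A (σ i)).reverse).prod}) ^ ((1 : ℝ) / k))
        Filter.atTop := by
  classical
  obtain ⟨q, hq⟩ := hcinf
  -- abbreviations
  let S : ℕ → Set ℝ := fun k => {x : ℝ | ∃ σ : Fin k → Fin m,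
      (∃ q : Fin (k + 1) → Fin ℓ,
        ∀ i : Fin k, f (q i.castSucc) (σ i) = some (q i.succ)) ∧
      x = N ((List.ofFn fun i => A (σ i)).reverse).prod}
  let u : ℕ → ℝ := fun k => (sSup (S k)) ^ ((1 : ℝ) / k)
  show specRad ((List.ofFn fun i => A (c i)).reverse).prod ^ ((1 : ℝ) / T) ≤
      Filter.limsup u Filter.atTop
  set B : Matrix (Fin n) (Fin n) ℝ := ((List.ofFn fun i => A (c i)).reverse).prod with hB
  -- the periodic word
  let g : ℕ → Matrix (Fin n) (Fin n) ℝ := fun x => A (c ⟨x % T, Nat.mod_lt x hT⟩)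
  have hgper : ∀ x, g (x + T) = g x := by
    intro x
    show A (c _) = A (c _)
    exact congrArg (fun t => A (c t)) (Fin.ext (Nat.add_mod_right x T))
  have hgB : (List.ofFn fun i : Fin T => g i.val).reverse.prod = B := by
    rw [hB]
    refine congrArg (fun l : List (Matrix (Fin n) (Fin n) ℝ) => l.reverse.prod) ?_
    refine congrArg List.ofFn (funext fun i => ?_)
    exact congrArg (fun t => A (c t)) (Fin.ext (Nat.mod_eq_of_lt i.isLt))
  have hprod : ∀ j : ℕ, (List.ofFn fun i : Fin (j * T) => g i.val).reverse.prod = B ^ j :=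
    fun j => by rw [ofFn_periodic_prod g T hgper j, hgB]
  -- basic facts about S and u
  have hSnonneg : ∀ k, ∀ x ∈ S k, (0 : ℝ) ≤ x := by
    rintro k x ⟨σ, _, rfl⟩
    exact hNnonneg _
  have hSbdd : ∀ k, BddAbove (S k) := by
    intro k
    apply Set.Finite.bddAbove
    apply Set.Finite.subset (Set.finite_range
      (fun σ : Fin k → Fin m => N ((List.ofFn fun i => A (σ i)).reverse).prod))
    rintro x ⟨σ, _, rfl⟩
    exact ⟨σ, rfl⟩
  have hsSupnonneg : ∀ k, 0 ≤ sSup (S k) := fun k => Real.sSup_nonneg (hSnonneg k)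
  have hunonneg : ∀ k, 0 ≤ u k := fun k => Real.rpow_nonneg (hsSupnonneg k) _
  have hmem : ∀ j : ℕ, N (B ^ j) ∈ S (j * T) := by
    intro j
    refine ⟨fun i => c ⟨i.val % T, Nat.mod_lt i.val hT⟩,
      ⟨fun i => q i.val, fun i => hq i.val⟩, ?_⟩
    exact (congrArg N (hprod j)).symm
  -- boundedness of u
  let P : ℝ := 1 + N 1 + ∑ i : Fin m, N (A i)
  have hsum_nonneg : (0:ℝ) ≤ ∑ i : Fin m, N (A i) :=
    Finset.sum_nonneg fun i _ => hNnonneg _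
  have hP1 : (1 : ℝ) ≤ P := by
    have := hNnonneg 1
    simp only [P]
    linarith
  have hP0 : (0 : ℝ) ≤ P := zero_le_one.trans hP1
  have hPA : ∀ i : Fin m, N (A i) ≤ P := by
    intro i
    have h1 : N (A i) ≤ ∑ i : Fin m, N (A i) :=
      Finset.single_le_sum (fun i _ => hNnonneg (A i)) (Finset.mem_univ i)
    have := hNnonneg 1
    simp only [P]
    linarith
  have hlistbound : ∀ l : List (Matrix (Fin n) (Fin n) ℝ),
      (∀ X ∈ l, N X ≤ P) → N l.prod ≤ P ^ (l.length + 1) := by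
    intro l
    induction l with
    | nil =>
        intro _
        simpa using (by
          have := hNnonneg 1
          simp only [P]
          linarith : N (1 : Matrix (Fin n) (Fin n) ℝ) ≤ P)
    | cons a l ih =>
        intro hl
        have h1 : N (a * l.prod) ≤ N a * N l.prod := hNmul _ _
        have h2 : N a ≤ P := hl a (List.mem_cons_self)
        have h3 : N l.prod ≤ P ^ (l.length + 1) := ih fun X hX => hl X (List.mem_cons_of_mem a hX)
        calc N (a :: l).prod = N (a * l.prod) := by rw [List.prod_cons]
          _ ≤ N a * N l.prod := h1
          _ ≤ P * P ^ (l.length + 1) :=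
              mul_le_mul h2 h3 (hNnonneg _) hP0
          _ = P ^ ((a :: l).length + 1) := by
              rw [List.length_cons, ← pow_succ']
  have hSub : ∀ k, ∀ x ∈ S k, x ≤ P ^ (k + 1) := by
    rintro k x ⟨σ, _, rfl⟩
    have hlen : ((List.ofFn fun i => A (σ i)).reverse).length = k := by simp
    have := hlistbound ((List.ofFn fun i => A (σ i)).reverse) ?_
    · rwa [hlen] at this
    · intro X hX
      rw [List.mem_reverse, List.mem_ofFn] at hX
      obtain ⟨i, rfl⟩ := hX
      exact hPA _
  have hubound : ∀ k, u k ≤ P ^ (2:ℕ) := by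
    intro k
    rcases Nat.eq_zero_or_pos k with hk | hk
    · subst hk
      show (sSup (S 0)) ^ ((1:ℝ)/((0:ℕ):ℝ)) ≤ P ^ (2:ℕ)
      rw [Nat.cast_zero, div_zero, Real.rpow_zero]
      exact one_le_pow₀ hP1
    · have hsup : sSup (S k) ≤ P ^ (k + 1) :=
        Real.sSup_le (hSub k) (by positivity)
      have h1 : u k ≤ (P ^ (k+1)) ^ ((1:ℝ)/k) :=
        Real.rpow_le_rpow (hsSupnonneg k) hsup (by positivity)
      refine h1.trans ?_
      rw [← Real.rpow_natCast P (k+1), ← Real.rpow_mul hP0, ← Real.rpow_natCast P 2]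
      apply Real.rpow_le_rpow_of_exponent_le hP1
      rw [mul_one_div]
      rw [div_le_iff₀ (by exact_mod_cast hk)]
      push_cast
      have hk1 : (1:ℝ) ≤ (k:ℝ) := by exact_mod_cast hk
      linarith
  have hbddU : Filter.IsBoundedUnder (· ≤ ·) Filter.atTop u :=
    ⟨P ^ (2:ℕ), Filter.eventually_map.2 (Filter.Eventually.of_forall hubound)⟩
  -- Gelfand bound
  obtain ⟨K, hK1, hK⟩ := gelfand_bound n N hNnonneg hNzero hNadd hNsmul
  -- main limsup argument
  refine le_of_forall_lt fun b hb => ?_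
  obtain ⟨b', hbb', hb'⟩ := exists_between hb
  refine lt_of_lt_of_le hbb' (Filter.le_limsup_of_frequently_le ?_ hbddU)
  rw [Filter.frequently_atTop]
  intro k₀
  by_cases hbneg : b' ≤ 0
  · exact ⟨k₀, le_refl _, hbneg.trans (hunonneg k₀)⟩
  push_neg at hbneg
  have hρ0 : (0:ℝ) ≤ specRad B := ENNReal.toReal_nonneg
  have hr : 1 < specRad B ^ ((1:ℝ)/T) / b' := (one_lt_div hbneg).2 hb'
  obtain ⟨n₀, hn₀⟩ := pow_unbounded_of_one_lt K hr
  set j : ℕ := max n₀ k₀ + 1 with hj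
  set k : ℕ := j * T with hk
  have hjk : j ≤ k := Nat.le_mul_of_pos_right j hT
  have hk₀ : k₀ ≤ k := le_trans (le_trans (le_max_right n₀ k₀) (Nat.le_succ _)) hjk
  have hn₀k : n₀ ≤ k := le_trans (le_trans (le_max_left n₀ k₀) (Nat.le_succ _)) hjk
  have hkpos : 0 < k := lt_of_lt_of_le (Nat.succ_pos _) hjk
  have hKr : K < (specRad B ^ ((1:ℝ)/T) / b') ^ k :=
    hn₀.trans_le (pow_le_pow_right₀ hr.le hn₀k)
  have hrk : (specRad B ^ ((1:ℝ)/T) / b') ^ k = specRad B ^ j / b' ^ k := by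
    rw [div_pow]
    congr 1
    rw [← Real.rpow_natCast (specRad B ^ ((1:ℝ)/T)) k, ← Real.rpow_mul hρ0]
    rw [show ((1:ℝ)/T) * (k:ℕ) = (j:ℕ) by
      rw [hk]
      push_cast
      field_simp]
    rw [Real.rpow_natCast]
  have h5 : K * b' ^ k < specRad B ^ j := by
    rw [hrk] at hKr
    exact (lt_div_iff₀ (pow_pos hbneg k)).1 hKr
  have h6 : b' ^ k < N (B ^ j) := by
    have hgel : specRad B ^ j ≤ K * N (B ^ j) := by
      have := hK B (max n₀ k₀)
      rwa [← hj] at this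
    have := h5.trans_le hgel
    exact lt_of_mul_lt_mul_left this (zero_le_one.trans hK1)
  have h7 : N (B ^ j) ≤ sSup (S k) := le_csSup (hSbdd k) (hmem j)
  refine ⟨k, hk₀, ?_⟩
  show b' ≤ (sSup (S k)) ^ ((1:ℝ)/k)
  have hb'eq : b' = (b' ^ k) ^ ((1:ℝ)/k) := by
    rw [← Real.rpow_natCast b' k, ← Real.rpow_mul hbneg.le, mul_one_div,
      div_self (by exact_mod_cast hkpos.ne' : (k:ℝ) ≠ 0), Real.rpow_one]
  rw [hb'eq]
  exact Real.rpow_le_rpow (pow_nonneg hbneg.le k) (h6.le.trans h7) (by positivity)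
end
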